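/- arXiv:1201.0101 — 4 statements merged into one kernel-verified Lean document; each statement's English description precedes it below -/
import Mathlib

section
/- The geometric mean is congruence invariant: for Hermitian positive definite A, B and any invertible matrix S, (S* A S) # (S* B S) = S* (A # B) S. -/
/-!
`X := A # B` is the unique positive semidefinite solution of the Riccati equation
`X * A⁻¹ * X = B`: conjugating by `T = A^{1/2}` turns the equation into
`(T⁻¹ X T⁻¹)² = T⁻¹ B T⁻¹`, whose positive semidefinite solution is the unique
square root.
A congruence `X ↦ Sᴴ X S` maps solutions for `(A, B)` to solutions for `(Sᴴ A S, Sᴴ B S)`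
and preserves positive semidefiniteness, so it maps `A # B` to `(Sᴴ A S) # (Sᴴ B S)`.
-/

open Matrix ComplexOrder

namespace Matrix.PosSemidef

/-- The square root of a positive semidefinite matrix (as defined in Mathlib, Dec 2024). -/
noncomputable def sqrt {n 𝕜 : Type*} [Fintype n] [DecidableEq n] [RCLike 𝕜]
    {A : Matrix n n 𝕜} (hA : PosSemidef A) : Matrix n n 𝕜 :=
  hA.1.eigenvectorUnitary.1 * diagonal ((↑) ∘ (√·) ∘ hA.1.eigenvalues) *
    (star hA.1.eigenvectorUnitary : Matrix n n 𝕜)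

lemma posSemidef_sqrt {n 𝕜 : Type*} [Fintype n] [DecidableEq n] [RCLike 𝕜]
    {A : Matrix n n 𝕜} (hA : PosSemidef A) : PosSemidef hA.sqrt := by
  apply PosSemidef.mul_mul_conjTranspose_same
  refine posSemidef_diagonal_iff.mpr fun i ↦ ?_
  rw [Function.comp_apply, RCLike.nonneg_iff]
  constructor
  · simp only [RCLike.ofReal_re]
    exact Real.sqrt_nonneg _
  · simp only [RCLike.ofReal_im]

end Matrix.PosSemidef

lemma geomMean_aux {n : ℕ} {A B : Matrix (Fin n) (Fin n) ℂ} (hA : A.PosDef) (hB : B.PosDef) :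
    ((hA.posSemidef.sqrt)⁻¹ * B * (hA.posSemidef.sqrt)⁻¹).PosSemidef := by
  have h := hB.posSemidef.conjTranspose_mul_mul_same (hA.posSemidef.sqrt)⁻¹
  rwa [(hA.posSemidef.posSemidef_sqrt.isHermitian.inv).eq] at h

/-- The geometric mean `A # B = A^{1/2} (A^{-1/2} B A^{-1/2})^{1/2} A^{1/2}` of two
Hermitian positive definite matrices. -/
noncomputable def geomMean {n : ℕ} {A B : Matrix (Fin n) (Fin n) ℂ}
    (hA : A.PosDef) (hB : B.PosDef) : Matrix (Fin n) (Fin n) ℂ :=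
  hA.posSemidef.sqrt * (geomMean_aux hA hB).sqrt * hA.posSemidef.sqrt

namespace Matrix

variable {n α : Type*} [Fintype n]

lemma PosSemidef.mul_mul_of_isHermitian {𝕜 : Type*} [RCLike 𝕜] {X T : Matrix n n 𝕜}
    (hX : X.PosSemidef) (hT : T.IsHermitian) : (T * X * T).PosSemidef := by
  simpa only [hT.eq] using hX.conjTranspose_mul_mul_same T

variable [DecidableEq n]

lemma mul_mul_mul_inv_mul_mul [CommRing α] {P Q : Matrix n n α} (hP : IsUnit P.det)
    (hQ : IsUnit Q.det) (X A Y : Matrix n n α) :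
    P * X * Q * (P * A * Q)⁻¹ * (P * Y * Q) = P * (X * A⁻¹ * Y) * Q := by
  simp only [mul_inv_rev, Matrix.mul_assoc, mul_nonsing_inv_cancel_left _ _ hQ,
    nonsing_inv_mul_cancel_left _ _ hP]

namespace PosSemidef

variable {𝕜 : Type*} [RCLike 𝕜]

open scoped MatrixOrder

lemma sqrt_eq_cfcSqrt {A : Matrix n n 𝕜} (hA : A.PosSemidef) : hA.sqrt = CFC.sqrt A := by
  rw [CFC.sqrt_eq_cfc, cfc_nnreal_eq_real _ A, hA.1.cfc_eq]
  simp only [IsHermitian.cfc, sqrt, Unitary.conjStarAlgAut_apply]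
  congr 3
  funext i
  simp [Real.coe_sqrt, Real.coe_toNNReal', max_eq_left (hA.eigenvalues_nonneg i)]

lemma sqrt_mul_sqrt {A : Matrix n n 𝕜} (hA : A.PosSemidef) : hA.sqrt * hA.sqrt = A := by
  rw [sqrt_eq_cfcSqrt]
  exact CFC.sqrt_mul_sqrt_self A hA.nonneg

lemma eq_sqrt_of_mul_self_eq {A B : Matrix n n 𝕜} (hA : A.PosSemidef) (hB : B.PosSemidef)
    (hAB : A * A = B) : A = hB.sqrt := by
  rw [sqrt_eq_cfcSqrt, eq_comm, CFC.sqrt_eq_iff B A hB.nonneg hA.nonneg, ← hAB]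

end PosSemidef

lemma PosDef.isUnit_det_sqrt {𝕜 : Type*} [RCLike 𝕜] {A : Matrix n n 𝕜} (hA : A.PosDef) :
    IsUnit hA.posSemidef.sqrt.det := by
  have hdet : hA.posSemidef.sqrt.det * hA.posSemidef.sqrt.det = A.det := by
    rw [← det_mul, hA.posSemidef.sqrt_mul_sqrt]
  exact isUnit_of_mul_isUnit_left (hdet ▸ (isUnit_iff_isUnit_det A).mp hA.isUnit)

end Matrix

variable {n : ℕ} {A B : Matrix (Fin n) (Fin n) ℂ}

lemma geomMean_posSemidef (hA : A.PosDef) (hB : B.PosDef) : (geomMean hA hB).PosSemidef :=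
  (geomMean_aux hA hB).posSemidef_sqrt.mul_mul_of_isHermitian
    hA.posSemidef.posSemidef_sqrt.isHermitian

lemma geomMean_mul_inv_mul_geomMean (hA : A.PosDef) (hB : B.PosDef) :
    geomMean hA hB * A⁻¹ * geomMean hA hB = B := by
  set T := hA.posSemidef.sqrt
  have hT : IsUnit T.det := hA.isUnit_det_sqrt
  have hTT : T * T = A := hA.posSemidef.sqrt_mul_sqrt
  calc geomMean hA hB * A⁻¹ * geomMean hA hB
      = T * (geomMean_aux hA hB).sqrt * T * (T * 1 * T)⁻¹ *
          (T * (geomMean_aux hA hB).sqrt * T) := by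
        rw [Matrix.mul_one, hTT, geomMean]
    _ = T * (T⁻¹ * B * T⁻¹) * T := by
        rw [mul_mul_mul_inv_mul_mul hT hT, inv_one, Matrix.mul_one,
          (geomMean_aux hA hB).sqrt_mul_sqrt]
    _ = B := by
        rw [← Matrix.mul_assoc, mul_nonsing_inv_cancel_left _ _ hT,
          nonsing_inv_mul_cancel_right _ _ hT]

lemma eq_geomMean_of_mul_inv_mul_eq {X : Matrix (Fin n) (Fin n) ℂ} (hA : A.PosDef)
    (hB : B.PosDef) (hX : X.PosSemidef) (hXAX : X * A⁻¹ * X = B) : X = geomMean hA hB := by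
  set T := hA.posSemidef.sqrt
  have hT : IsUnit T.det := hA.isUnit_det_sqrt
  have hTT : T * T = A := hA.posSemidef.sqrt_mul_sqrt
  have hTAT : T⁻¹ * A * T⁻¹ = 1 := by
    rw [← hTT, Matrix.mul_assoc, Matrix.mul_assoc, mul_nonsing_inv _ hT, Matrix.mul_one,
      nonsing_inv_mul _ hT]
  have hT' : IsUnit T⁻¹.det := isUnit_nonsing_inv_det_iff.mpr hT
  have hY_sq : (T⁻¹ * X * T⁻¹) * (T⁻¹ * X * T⁻¹) = T⁻¹ * B * T⁻¹ := by
    simpa only [hTAT, inv_one, Matrix.mul_one, hXAX] using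
      mul_mul_mul_inv_mul_mul hT' hT' X A X
  have hY : T⁻¹ * X * T⁻¹ = (geomMean_aux hA hB).sqrt :=
    (hX.mul_mul_of_isHermitian hA.posSemidef.posSemidef_sqrt.isHermitian.inv)
      |>.eq_sqrt_of_mul_self_eq _ hY_sq
  rw [geomMean, ← hY, ← Matrix.mul_assoc, mul_nonsing_inv_cancel_left _ _ hT,
    nonsing_inv_mul_cancel_right _ _ hT]

/-- Congruence invariance of the geometric mean. -/
theorem geomMean_congruence_invariant {n : ℕ} {A B S : Matrix (Fin n) (Fin n) ℂ}
    (hA : A.PosDef) (hB : B.PosDef) (hS : IsUnit S.det)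
    (hAS : (Sᴴ * A * S).PosDef) (hBS : (Sᴴ * B * S).PosDef) :
    geomMean hAS hBS = Sᴴ * geomMean hA hB * S := by
  have hSH : IsUnit Sᴴ.det := by rw [det_conjTranspose]; exact hS.star
  refine (eq_geomMean_of_mul_inv_mul_eq hAS hBS
    ((geomMean_posSemidef hA hB).conjTranspose_mul_mul_same S) ?_).symm
  rw [mul_mul_mul_inv_mul_mul hSH hS, geomMean_mul_inv_mul_geomMean]
end

section
/- Let A, B be Hermitian positive definite and define the averaging iteration A_0 = A, B_0 = B, A_{k+1} = (A_k + B_k)/2, B_{k+1} = 2(A_k^{-1} + B_k^{-1})^{-1}. Then for all k ≥ 0, A_k = A B_k^{-1} B = B B_k^{-1} A and B_k = A A_k^{-1} B = B A_k^{-1} A. -/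
/-! For invertible matrices, `X = A Y⁻¹ B` is equivalent to `Y = B X⁻¹ A`, so the four relations
reduce to the invariant `A_k = A B_k⁻¹ B = B B_k⁻¹ A`. It holds at `k = 0` and propagates, since
by the invariant in both forms
`A B_{k+1}⁻¹ B = ½ (A A_k⁻¹ B + A B_k⁻¹ B) = ½ (B_k + A_k) = A_{k+1}`.
Positive definiteness of the iterates supplies every inverse needed. -/

open Matrix ComplexOrder

namespace Matrix

variable {n : Type*} [Fintype n] [DecidableEq n]

theorem eq_mul_nonsing_inv_mul_of_eq_mul_nonsing_inv_mul {α : Type*} [CommRing α]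
    {A B X Y : Matrix n n α} (hA : IsUnit A.det) (hB : IsUnit B.det) (hY : IsUnit Y.det)
    (h : X = A * Y⁻¹ * B) : Y = B * X⁻¹ * A := by
  rw [h, mul_inv_rev, mul_inv_rev, nonsing_inv_nonsing_inv _ hY]
  simp only [Matrix.mul_assoc, nonsing_inv_mul _ hA, mul_nonsing_inv_cancel_left _ _ hB,
    Matrix.mul_one]

theorem inv_smul_add_eq_mul_nonsing_inv_mul {K : Type*} [Field K] {A B X Y : Matrix n n K}
    {c : K} (hc : c ≠ 0) (hS : IsUnit (X⁻¹ + Y⁻¹).det)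
    (hX : X = A * Y⁻¹ * B) (hY : Y = A * X⁻¹ * B) :
    c⁻¹ • (X + Y) = A * (c • (X⁻¹ + Y⁻¹)⁻¹)⁻¹ * B := by
  have := invertibleOfNonzero hc
  rw [inv_smul _ _ (isUnit_nonsing_inv_det _ hS), nonsing_inv_nonsing_inv _ hS, invOf_eq_inv,
    Matrix.mul_smul, Matrix.smul_mul, Matrix.mul_add, Matrix.add_mul, ← hX, ← hY, add_comm]

theorem PosDef.isUnit_det {K : Type*} [Field K] [PartialOrder K] [StarRing K] {M : Matrix n n K}
    (hM : M.PosDef) : IsUnit M.det :=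
  (isUnit_iff_isUnit_det M).mp hM.isUnit

end Matrix

section AveragingIteration

variable {n 𝕜 : Type*} [Fintype n] [DecidableEq n] [RCLike 𝕜]
  {A B : Matrix n n 𝕜} {As Bs : ℕ → Matrix n n 𝕜}

theorem posDef_averaging_iterates (hA : A.PosDef) (hB : B.PosDef)
    (hA0 : As 0 = A) (hB0 : Bs 0 = B)
    (hArec : ∀ k, As (k + 1) = (2 : 𝕜)⁻¹ • (As k + Bs k))
    (hBrec : ∀ k, Bs (k + 1) = (2 : 𝕜) • ((As k)⁻¹ + (Bs k)⁻¹)⁻¹) :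
    ∀ k, (As k).PosDef ∧ (Bs k).PosDef
  | 0 => hA0 ▸ hB0 ▸ ⟨hA, hB⟩
  | k + 1 => by
    obtain ⟨hAk, hBk⟩ := posDef_averaging_iterates hA hB hA0 hB0 hArec hBrec k
    rw [hArec, hBrec]
    exact ⟨(hAk.add hBk).smul (by positivity), (hAk.inv.add hBk.inv).inv.smul two_pos⟩

theorem averaging_iterates_eq_mul_nonsing_inv_mul (hA : A.PosDef) (hB : B.PosDef)
    (hA0 : As 0 = A) (hB0 : Bs 0 = B)
    (hArec : ∀ k, As (k + 1) = (2 : 𝕜)⁻¹ • (As k + Bs k))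
    (hBrec : ∀ k, Bs (k + 1) = (2 : 𝕜) • ((As k)⁻¹ + (Bs k)⁻¹)⁻¹) :
    ∀ k, As k = A * (Bs k)⁻¹ * B ∧ As k = B * (Bs k)⁻¹ * A
  | 0 => by
    rw [hA0, hB0, nonsing_inv_mul_cancel_right _ _ hB.isUnit_det, mul_nonsing_inv _ hB.isUnit_det,
      Matrix.one_mul]
    exact ⟨rfl, rfl⟩
  | k + 1 => by
    obtain ⟨hAk, hBk⟩ := posDef_averaging_iterates hA hB hA0 hB0 hArec hBrec k
    obtain ⟨h₁, h₂⟩ := averaging_iterates_eq_mul_nonsing_inv_mul hA hB hA0 hB0 hArec hBrec k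
    have hS := (hAk.inv.add hBk.inv).isUnit_det
    rw [hArec, hBrec]
    exact ⟨inv_smul_add_eq_mul_nonsing_inv_mul two_ne_zero hS h₁
        (eq_mul_nonsing_inv_mul_of_eq_mul_nonsing_inv_mul hB.isUnit_det hA.isUnit_det
          hBk.isUnit_det h₂),
      inv_smul_add_eq_mul_nonsing_inv_mul two_ne_zero hS h₂
        (eq_mul_nonsing_inv_mul_of_eq_mul_nonsing_inv_mul hA.isUnit_det hB.isUnit_det
          hBk.isUnit_det h₁)⟩

end AveragingIteration

/-- In the averaging iteration, `A_k = A B_k⁻¹ B = B B_k⁻¹ A` and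
`B_k = A A_k⁻¹ B = B A_k⁻¹ A` for all `k`. -/
theorem averaging_cross_relations {n : ℕ} {A B : Matrix (Fin n) (Fin n) ℂ}
    (hA : A.PosDef) (hB : B.PosDef)
    (As Bs : ℕ → Matrix (Fin n) (Fin n) ℂ)
    (hA0 : As 0 = A) (hB0 : Bs 0 = B)
    (hArec : ∀ k, As (k + 1) = (2 : ℂ)⁻¹ • (As k + Bs k))
    (hBrec : ∀ k, Bs (k + 1) = (2 : ℂ) • ((As k)⁻¹ + (Bs k)⁻¹)⁻¹) :
    ∀ k, (As k = A * (Bs k)⁻¹ * B ∧ As k = B * (Bs k)⁻¹ * A) ∧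
      (Bs k = A * (As k)⁻¹ * B ∧ Bs k = B * (As k)⁻¹ * A) := by
  intro k
  obtain ⟨-, hBk⟩ := posDef_averaging_iterates hA hB hA0 hB0 hArec hBrec k
  obtain ⟨h₁, h₂⟩ := averaging_iterates_eq_mul_nonsing_inv_mul hA hB hA0 hB0 hArec hBrec k
  exact ⟨⟨h₁, h₂⟩,
    eq_mul_nonsing_inv_mul_of_eq_mul_nonsing_inv_mul hB.isUnit_det hA.isUnit_det hBk.isUnit_det h₂,
    eq_mul_nonsing_inv_mul_of_eq_mul_nonsing_inv_mul hA.isUnit_det hB.isUnit_det hBk.isUnit_det h₁⟩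
end

section
/- Define g_k(z) = ((1+z)^k − (1−z)^k)/((1+z)^k + (1−z)^k) for z complex with (1+z)^k + (1−z)^k ≠ 0. Then for all positive integers r, s, g_{rs}(z) = g_r(g_s(z)). -/
/-- The `k`-th principal Padé iteration function for the matrix sign. -/
noncomputable def padeSign (k : ℕ) (z : ℂ) : ℂ :=
  ((1 + z) ^ k - (1 - z) ^ k) / ((1 + z) ^ k + (1 - z) ^ k)

/-!
Writing `a = (1 + z) ^ s` and `b = (1 - z) ^ s`, we have `g_s z = (a - b) / (a + b)`, so
`1 + g_s z` and `1 - g_s z` are `a` and `b` times the common factor `2 / (a + b)`. The quotient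
`(x ^ r - y ^ r) / (x ^ r + y ^ r)` is invariant under scaling `(x, y)` by a common factor, hence
`g_r (g_s z) = (a ^ r - b ^ r) / (a ^ r + b ^ r) = g_{rs} z`.
-/

theorem mul_sub_mul_div_mul_add_mul {K : Type*} [Field K] {c : K} (hc : c ≠ 0) (x y : K) :
    (c * x - c * y) / (c * x + c * y) = (x - y) / (x + y) := by
  rw [← mul_sub, ← mul_add, mul_div_mul_left _ _ hc]

theorem padeSign_sub_div_add {a b : ℂ} (hab : a + b ≠ 0) (r : ℕ) :
    padeSign r ((a - b) / (a + b)) = (a ^ r - b ^ r) / (a ^ r + b ^ r) := by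
  have h_add : 1 + (a - b) / (a + b) = 2 / (a + b) * a := by field_simp; ring
  have h_sub : 1 - (a - b) / (a + b) = 2 / (a + b) * b := by field_simp; ring
  have hc : (2 / (a + b)) ^ r ≠ 0 := pow_ne_zero _ (div_ne_zero two_ne_zero hab)
  rw [padeSign, h_add, h_sub, mul_pow, mul_pow, mul_sub_mul_div_mul_add_mul hc]

theorem padeSign_comp_general (r s : ℕ) (z : ℂ)
    (h1 : (1 + z) ^ s + (1 - z) ^ s ≠ 0) :
    padeSign (r * s) z = padeSign r (padeSign s z) := by
  rw [padeSign.eq_1 s, padeSign_sub_div_add h1, padeSign, mul_comm, pow_mul, pow_mul]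

/-- Composition property of the principal Padé iterations: `g_{rs} = g_r ∘ g_s`. -/
theorem padeSign_comp (r s : ℕ) (hr : 0 < r) (hs : 0 < s) (z : ℂ)
    (h1 : (1 + z) ^ s + (1 - z) ^ s ≠ 0)
    (h2 : (1 + z) ^ (r * s) + (1 - z) ^ (r * s) ≠ 0) :
    padeSign (r * s) z = padeSign r (padeSign s z) :=
  padeSign_comp_general r s z h1
end

section
/- Let z be a complex number not in (−∞, 0], and define the Newton iteration z_0 = z, z_{k+1} = (z_k + z/z_k)/2 for the square root of z. Then for each k ≥ 1, z_k = p(z)/q(z), where p/q is the [2^{k−1}, 2^{k−1}−1] Padé approximant at 1 of the function z^{1/2}. -/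
/-!
With `s = z^{1/2}`, write `w_k = s (a + b) / (a - b)`. The starting value `w_0 = s²` has this form
with `a = 1 + s`, `b = s - 1`, and a Newton step replaces `(a, b)` by `(a², b²)`, so
`a_k = (1 + s)^{2^k}` and `b_k = (s - 1)^{2^k}`, which equals `(1 - s)^{2^k}` once `k ≥ 1`.
Since `Re s > 0`, `s - 1` is strictly shorter than `1 + s`, so `a_k ± b_k` never vanish.
-/

theorem newton_step_mul_add_div_sub {K : Type*} [Field K] [NeZero (2 : K)] (s a b : K)
    (hadd : a + b ≠ 0) (hsub : a - b ≠ 0) :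
    s * (a ^ 2 + b ^ 2) / (a ^ 2 - b ^ 2) =
      (s * (a + b) / (a - b) + s ^ 2 / (s * (a + b) / (a - b))) / 2 := by
  have h2 : (2 : K) ≠ 0 := NeZero.ne 2
  have hsq : a ^ 2 - b ^ 2 = (a + b) * (a - b) := by ring
  rw [hsq]
  field_simp
  ring

theorem newton_sqrt_eq_mul_add_div_sub {K : Type*} [Field K] [NeZero (2 : K)] (s : K) (w : ℕ → K)
    (hw0 : w 0 = s ^ 2) (hrec : ∀ k, w (k + 1) = (w k + s ^ 2 / w k) / 2)
    (hdeg : ∀ k, (1 + s) ^ 2 ^ k + (s - 1) ^ 2 ^ k ≠ 0 ∧ (1 + s) ^ 2 ^ k - (s - 1) ^ 2 ^ k ≠ 0)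
    (k : ℕ) :
    w k = s * ((1 + s) ^ 2 ^ k + (s - 1) ^ 2 ^ k) / ((1 + s) ^ 2 ^ k - (s - 1) ^ 2 ^ k) := by
  induction k with
  | zero =>
    have h2 : (2 : K) ≠ 0 := NeZero.ne 2
    rw [hw0, pow_zero, pow_one, pow_one, show 1 + s + (s - 1) = 2 * s by ring,
      show 1 + s - (s - 1) = 2 by ring]
    field_simp
  | succ k ih =>
    obtain ⟨hadd, hsub⟩ := hdeg k
    rw [hrec, ih, pow_succ 2 k, pow_mul, pow_mul, newton_step_mul_add_div_sub s _ _ hadd hsub]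

theorem norm_add_ne_zero_and_sub_ne_zero {E : Type*} [SeminormedAddCommGroup E] {a b : E}
    (h : ‖b‖ < ‖a‖) : a + b ≠ 0 ∧ a - b ≠ 0 := by
  constructor <;> intro h0
  · rw [add_eq_zero_iff_eq_neg.mp h0, norm_neg] at h; exact lt_irrefl _ h
  · rw [sub_eq_zero.mp h0] at h; exact lt_irrefl _ h

theorem Complex.norm_sub_one_lt_norm_one_add {s : ℂ} (hs : 0 < s.re) : ‖s - 1‖ < ‖1 + s‖ := by
  rw [← sq_lt_sq₀ (norm_nonneg _) (norm_nonneg _), ← normSq_eq_norm_sq, ← normSq_eq_norm_sq,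
    normSq_apply, normSq_apply]
  simp only [sub_re, sub_im, add_re, add_im, one_re, one_im]
  nlinarith

theorem Complex.re_cpow_inv_two_pos {z : ℂ} (hz : z ∈ slitPlane) : 0 < (z ^ (2⁻¹ : ℂ)).re := by
  rw [cpow_inv_two_re]
  apply Real.sqrt_pos_of_pos
  rcases mem_slitPlane_iff.mp hz with hre | him
  · linarith [norm_nonneg z]
  · linarith [neg_abs_le z.re, abs_re_lt_norm.mpr him]

/-- The Newton iteration for the square root of `z ∉ (−∞, 0]` produces the `[2^{k−1}, 2^{k−1}−1]`
Padé approximants of `z^{1/2}` at `1`; equivalently, writing `s = √z` (principal branch),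
`z_k = s ((1+s)^{2^k} + (1−s)^{2^k}) / ((1+s)^{2^k} − (1−s)^{2^k})` for `k ≥ 1`. -/
theorem newton_sqrt_eq_pade (z : ℂ) (hz : ¬(z.im = 0 ∧ z.re ≤ 0))
    (w : ℕ → ℂ) (hw0 : w 0 = z)
    (hrec : ∀ k, w (k + 1) = (w k + z / w k) / 2) :
    ∀ k, 1 ≤ k →
      w k = z ^ ((1 : ℂ) / 2) *
          ((1 + z ^ ((1 : ℂ) / 2)) ^ (2 ^ k) + (1 - z ^ ((1 : ℂ) / 2)) ^ (2 ^ k)) /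
          ((1 + z ^ ((1 : ℂ) / 2)) ^ (2 ^ k) - (1 - z ^ ((1 : ℂ) / 2)) ^ (2 ^ k)) := by
  intro k hk
  have hslit : z ∈ Complex.slitPlane := by
    rw [Complex.mem_slitPlane_iff]
    by_contra! h
    exact hz ⟨h.2, h.1⟩
  rw [one_div]
  set s := z ^ (2⁻¹ : ℂ)
  have hsq : s ^ 2 = z := Complex.cpow_ofNat_inv_pow z 2
  have hnorm := Complex.norm_sub_one_lt_norm_one_add (Complex.re_cpow_inv_two_pos hslit)
  have hdeg (j : ℕ) : (1 + s) ^ 2 ^ j + (s - 1) ^ 2 ^ j ≠ 0 ∧ (1 + s) ^ 2 ^ j - (s - 1) ^ 2 ^ j ≠ 0 :=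
    norm_add_ne_zero_and_sub_ne_zero <| by
      simpa only [norm_pow] using pow_lt_pow_left₀ hnorm (norm_nonneg _) (by positivity)
  have heven : Even (2 ^ k) := (Nat.even_pow' (by omega)).mpr even_two
  rw [← hsq] at hw0 hrec
  rw [newton_sqrt_eq_mul_add_div_sub s w hw0 hrec hdeg k, ← neg_sub, heven.neg_pow]
end
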